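/- (Theorem 1, sufficiency and value.) Let {(q_i, ρ_i)}_{i=1}^N be an ensemble of qubit states with Bloch vectors v_i and q_1 = max_i q_i; set e_i = q_1 − q_i and s_i = q_i v_i − q_1 v_1 (so s_1 = 0), and assume {s_1,…,s_N} is affinely independent (D = N−1). Suppose c* lies in the relative interior of conv{s_1,…,s_N} and satisfies ‖c* − s_i‖₂ − ‖c*‖₂ = e_i for all i ∈ {2,…,N}. Then p_guess = q_1 + ‖c*‖₂, the optimal POVM is unique, and it equals M_i = p_i(I + u_i·σ) with u_i = (s_i − c*)/‖s_i − c*‖₂ and p_i = t_i ‖s_i − c*‖₂ / ∑_j t_j ‖s_j − c*‖₂, where (t_i) are the barycentric coordinates of c* in the simplex conv{s_1,…,s_N}. -/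

import Mathlib

open Matrix
open scoped ComplexOrder

noncomputable section

/-- The Pauli matrix σ_X. -/
def sigmaX : Matrix (Fin 2) (Fin 2) ℂ := !![0, 1; 1, 0]

/-- The Pauli matrix σ_Y. -/
def sigmaY : Matrix (Fin 2) (Fin 2) ℂ := !![0, -Complex.I; Complex.I, 0]

/-- The Pauli matrix σ_Z. -/
def sigmaZ : Matrix (Fin 2) (Fin 2) ℂ := !![1, 0; 0, -1]

/-- `v · σ = v₁ σ_X + v₂ σ_Y + v₃ σ_Z` for a vector `v ∈ ℝ³`. -/
def pauliDot (v : EuclideanSpace ℝ (Fin 3)) : Matrix (Fin 2) (Fin 2) ℂ :=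
  (v 0 : ℂ) • sigmaX + (v 1 : ℂ) • sigmaY + (v 2 : ℂ) • sigmaZ

/-- A qubit state: a 2×2 complex positive semidefinite matrix with trace 1. -/
def IsQubitState (ρ : Matrix (Fin 2) (Fin 2) ℂ) : Prop :=
  ρ.PosSemidef ∧ ρ.trace = 1

/-- An `N`-outcome POVM: positive semidefinite matrices summing to the identity. -/
def IsPOVM {N : ℕ} (M : Fin N → Matrix (Fin 2) (Fin 2) ℂ) : Prop :=
  (∀ i, (M i).PosSemidef) ∧ ∑ i, M i = 1

/-- The guessing probability of the ensemble `{(q i, ρ i)}`: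
the supremum over all `N`-outcome POVMs of `∑ i, q i · Re (tr (ρ i * M i))`. -/
def pGuess {N : ℕ} (q : Fin N → ℝ) (ρ : Fin N → Matrix (Fin 2) (Fin 2) ℂ) : ℝ :=
  sSup {x : ℝ | ∃ M : Fin N → Matrix (Fin 2) (Fin 2) ℂ,
    IsPOVM M ∧ x = ∑ i, q i * ((ρ i * M i).trace).re}

/-- A POVM is optimal when it attains the guessing probability. -/
def IsOptimalPOVM {N : ℕ} (q : Fin N → ℝ) (ρ M : Fin N → Matrix (Fin 2) (Fin 2) ℂ) : Prop :=
  IsPOVM M ∧ ∑ i, q i * ((ρ i * M i).trace).re = pGuess q ρ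

/-!
Write a 2×2 Hermitian matrix as `M = α • 1 + w · σ`: it is positive semidefinite iff
`‖w‖ ≤ α`, and `Re tr (ρᵢ M) = α + ⟪vᵢ, w⟫`. For a POVM `∑ αᵢ = 1` and `∑ wᵢ = 0`, and the
hypothesis `‖sᵢ - c‖ = ‖c‖ + eᵢ` turns the success probability into
`q₁ + ‖c‖ - ∑ᵢ (‖sᵢ - c‖ αᵢ - ⟪sᵢ - c, wᵢ⟫)`, a sum of nonnegative Cauchy–Schwarz slacks.
These vanish for the POVM of the statement. Conversely, if they all vanish then
`wᵢ = (αᵢ / ‖sᵢ - c‖) (sᵢ - c)`, so `∑ wᵢ = 0` is a linear relation among the `sᵢ - c`; by affine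
independence it is proportional to the barycentric one `∑ tᵢ (sᵢ - c) = 0`, which pins down
`αᵢ = pᵢ`.
-/

open scoped RealInnerProductSpace

local notation "ℝ³" => EuclideanSpace ℝ (Fin 3)
local notation "Mat₂" => Matrix (Fin 2) (Fin 2) ℂ

section InnerProductSpace

variable {F : Type*} [NormedAddCommGroup F] [InnerProductSpace ℝ F]

theorem real_inner_le_norm_mul_of_norm_le (x : F) {w : F} {a : ℝ} (hw : ‖w‖ ≤ a) :
    ⟪x, w⟫ ≤ ‖x‖ * a :=
  (real_inner_le_norm x w).trans (mul_le_mul_of_nonneg_left hw (norm_nonneg x))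

theorem eq_div_norm_smul_of_inner_eq_norm_mul {x w : F} {a : ℝ} (hx : x ≠ 0) (hw : ‖w‖ ≤ a)
    (h : ⟪x, w⟫ = ‖x‖ * a) : w = (a / ‖x‖) • x := by
  have hx' : 0 < ‖x‖ := norm_pos_iff.mpr hx
  have hwa : ‖w‖ = a := le_antisymm hw <|
    le_of_mul_le_mul_left (h ▸ real_inner_le_norm x w) hx'
  have hpar := inner_eq_norm_mul_iff_real.mp (hwa ▸ h)
  rw [← hwa, div_eq_inv_mul, mul_smul, hpar, smul_smul, inv_mul_cancel₀ hx'.ne', one_smul]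

variable {ι : Type*} [Fintype ι]

theorem sum_mul_add_inner_eq_sub_sum {q α : ι → ℝ} {v s w : ι → F} {b c : F} {K : ℝ}
    (hq : ∀ i, q i = K - ‖s i - c‖) (hs : ∀ i, q i • v i = s i + b)
    (hα : ∑ i, α i = 1) (hw : ∑ i, w i = 0) :
    ∑ i, q i * (α i + ⟪v i, w i⟫) = K - ∑ i, (‖s i - c‖ * α i - ⟪s i - c, w i⟫) := by
  have hterm i : q i * (α i + ⟪v i, w i⟫)
      = K * α i - (‖s i - c‖ * α i - ⟪s i - c, w i⟫) + ⟪c + b, w i⟫ := by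
    rw [mul_add, ← real_inner_smul_left, hs, hq, inner_sub_left, inner_add_left,
      inner_add_left]
    ring
  simp only [hterm, Finset.sum_add_distrib, Finset.sum_sub_distrib, ← Finset.mul_sum,
    ← inner_sum, hα, hw, inner_zero_right]
  ring

end InnerProductSpace

section Affine

variable {k V ι : Type*} [Ring k] [AddCommGroup V] [Module k V] [Fintype ι] {s : ι → V}
  {t : ι → k} {c : V}

theorem sum_smul_sub_eq_zero (ht : ∑ i, t i = 1) (htc : ∑ i, t i • s i = c) :
    ∑ i, t i • (s i - c) = 0 := by
  simp only [smul_sub, Finset.sum_sub_distrib, ← Finset.sum_smul, ht, htc, one_smul, sub_self]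

theorem AffineIndependent.eq_sum_mul_of_sum_smul_sub_eq_zero (hs : AffineIndependent k s)
    (ht : ∑ i, t i = 1) (htc : ∑ i, t i • s i = c) {β : ι → k}
    (hβ : ∑ i, β i • (s i - c) = 0) (i : ι) : β i = (∑ j, β j) * t i := by
  refine hs.eq_of_sum_eq_sum (s := Finset.univ) (w₂ := fun j => (∑ j, β j) * t j) ?_ ?_ i
    (Finset.mem_univ i)
  · rw [← Finset.mul_sum, ht, mul_one]
  · simp only [smul_sub, Finset.sum_sub_distrib, sub_eq_zero, ← Finset.sum_smul] at hβ
    simp only [hβ, mul_smul, ← Finset.smul_sum, htc]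

theorem AffineIndependent.ne_of_sum_smul_eq [Nontrivial ι]
    (hs : AffineIndependent k s) (ht : ∑ i, t i = 1) (htc : ∑ i, t i • s i = c)
    (ht0 : ∀ i, t i ≠ 0) (i : ι) : s i ≠ c := by
  classical
  intro hsc
  obtain ⟨j, hji⟩ := exists_ne i
  have := hs.eq_sum_mul_of_sum_smul_sub_eq_zero ht htc (β := Pi.single i 1)
    (by simp [Pi.single_apply, hsc]) j
  exact ht0 j (by simpa [Pi.single_apply, hji, eq_comm] using this)

theorem AffineIndependent.eq_mul_norm_div_of_sum_div_norm_smul_eq_zero {F : Type*}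
    [NormedAddCommGroup F] [InnerProductSpace ℝ F] {s : ι → F} {t : ι → ℝ} {c : F}
    (hs : AffineIndependent ℝ s) (ht : ∑ i, t i = 1) (htc : ∑ i, t i • s i = c)
    (hsc : ∀ i, s i ≠ c) {α : ι → ℝ} (hα : ∑ i, α i = 1)
    (h : ∑ i, (α i / ‖s i - c‖) • (s i - c) = 0) (i : ι) :
    α i = t i * ‖s i - c‖ / ∑ j, t j * ‖s j - c‖ := by
  set B := ∑ j, α j / ‖s j - c‖
  have hαt j : α j = B * (t j * ‖s j - c‖) := by
    have hβ := hs.eq_sum_mul_of_sum_smul_sub_eq_zero ht htc h j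
    rw [div_eq_iff (norm_pos_iff.mpr (sub_ne_zero.mpr (hsc j))).ne'] at hβ
    rw [hβ, mul_assoc]
  have hBS : B * ∑ j, t j * ‖s j - c‖ = 1 := by
    rw [Finset.mul_sum, ← hα]
    exact Finset.sum_congr rfl fun j _ => (hαt j).symm
  rw [hαt i, eq_div_iff (right_ne_zero_of_mul_eq_one hBS), mul_right_comm, hBS, one_mul]

end Affine

section Weights

variable {F ι : Type*} [NormedAddCommGroup F] [Fintype ι] {x : ι → F} {t : ι → ℝ}

theorem sum_mul_norm_div_sum_eq_one [Nonempty ι] (ht : ∀ i, 0 < t i) (hx : ∀ i, x i ≠ 0) :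
    ∑ i, t i * ‖x i‖ / ∑ j, t j * ‖x j‖ = 1 := by
  refine (Finset.sum_div ..).symm.trans (div_self (Finset.sum_pos ?_ Finset.univ_nonempty).ne')
  exact fun i _ => mul_pos (ht i) (norm_pos_iff.mpr (hx i))

theorem sum_mul_norm_div_smul_inv_norm_smul_eq_zero [Module ℝ F] (hx : ∀ i, x i ≠ 0)
    (htx : ∑ i, t i • x i = 0) :
    ∑ i, (t i * ‖x i‖ / ∑ j, t j * ‖x j‖) • (‖x i‖⁻¹ • x i) = 0 := by
  have hterm i : (t i * ‖x i‖ / ∑ j, t j * ‖x j‖) • (‖x i‖⁻¹ • x i)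
      = (∑ j, t j * ‖x j‖)⁻¹ • t i • x i := by
    rw [smul_smul, smul_smul]
    field_simp [norm_ne_zero_iff.mpr (hx i)]
  rw [Finset.sum_congr rfl fun i _ => hterm i, ← Finset.smul_sum, htx, smul_zero]

end Weights

theorem pauliDot_eq (x : ℝ³) :
    pauliDot x = !![(x 2 : ℂ), x 0 - x 1 * Complex.I; x 0 + x 1 * Complex.I, -x 2] := by
  ext i j
  fin_cases i <;> fin_cases j <;> simp [pauliDot, sigmaX, sigmaY, sigmaZ, sub_eq_add_neg]

theorem pauliDot_smul (r : ℝ) (x : ℝ³) : pauliDot (r • x) = (r : ℂ) • pauliDot x := by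
  simp only [pauliDot, PiLp.smul_apply, smul_eq_mul, Complex.ofReal_mul]
  module

theorem pauliDot_zero : pauliDot 0 = 0 := by
  simp [pauliDot]

def pauliScalar : Mat₂ →+ ℝ where
  toFun M := (M.trace).re / 2
  map_zero' := by simp
  map_add' M N := by simp [add_div]

def pauliVector : Mat₂ →+ ℝ³ where
  toFun M := !₂[(sigmaX * M).trace.re / 2, (sigmaY * M).trace.re / 2, (sigmaZ * M).trace.re / 2]
  map_zero' := by ext i; fin_cases i <;> simp
  map_add' M N := by ext i; fin_cases i <;> simp [Matrix.mul_add, add_div]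

theorem pauliScalar_apply (M : Mat₂) : pauliScalar M = ((M 0 0).re + (M 1 1).re) / 2 := by
  simp [pauliScalar, trace_fin_two]

theorem pauliVector_apply (M : Mat₂) : pauliVector M =
    !₂[((M 0 1).re + (M 1 0).re) / 2, ((M 1 0).im - (M 0 1).im) / 2,
      ((M 0 0).re - (M 1 1).re) / 2] := by
  ext i
  fin_cases i <;> simp [pauliVector, sigmaX, sigmaY, sigmaZ, trace_fin_two, vecMul, dotProduct] <;>
    ring

theorem pauliScalar_one : pauliScalar 1 = 1 := by
  simp [pauliScalar_apply]

theorem pauliVector_one : pauliVector 1 = 0 := by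
  ext i; fin_cases i <;> simp [pauliVector_apply]

theorem pauliScalar_smul_one_add_pauliDot (a : ℝ) (x : ℝ³) :
    pauliScalar ((a : ℂ) • (1 + pauliDot x)) = a := by
  simp only [pauliScalar_apply, pauliDot_eq, smul_add, Matrix.add_apply, Matrix.smul_apply,
    one_apply_eq, of_apply, cons_val', cons_val_zero, cons_val_one, cons_val_fin_one, smul_eq_mul,
    mul_one, mul_neg, Complex.add_re, Complex.neg_re, Complex.re_ofReal_mul, Complex.ofReal_re]
  ring

theorem pauliVector_smul_one_add_pauliDot (a : ℝ) (x : ℝ³) :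
    pauliVector ((a : ℂ) • (1 + pauliDot x)) = a • x := by
  ext i; fin_cases i <;> simp [pauliVector_apply, pauliDot_eq]

theorem re_trace_half_one_add_pauliDot_mul (v : ℝ³) (M : Mat₂) :
    ((2⁻¹ : ℂ) • (1 + pauliDot v) * M).trace.re = pauliScalar M + ⟪v, pauliVector M⟫ := by
  simp only [pauliDot, Complex.coe_smul, smul_add, Matrix.add_mul, Algebra.smul_mul_assoc, one_mul,
    trace_add, trace_smul, smul_eq_mul, Complex.real_smul, Complex.add_re, Complex.mul_re,
    Complex.inv_re, Complex.re_ofNat, Complex.normSq_ofNat, div_self_mul_self', Complex.inv_im,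
    Complex.im_ofNat, neg_zero, zero_div, zero_mul, sub_zero, Complex.ofReal_re, Complex.ofReal_im,
    Complex.mul_im, add_zero, pauliScalar, AddMonoidHom.coe_mk, ZeroHom.coe_mk, pauliVector,
    PiLp.inner_apply, RCLike.inner_apply, Real.ringHom_apply, Fin.sum_univ_three, cons_val_zero,
    cons_val_one, cons_val]
  ring

theorem Matrix.IsHermitian.pauliScalar_smul_one_add_pauliDot_pauliVector {M : Mat₂}
    (hM : M.IsHermitian) : (pauliScalar M : ℂ) • 1 + pauliDot (pauliVector M) = M := by
  have h := fun i j => Complex.ext_iff.mp (hM.apply i j)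
  simp only [Complex.star_def, Complex.conj_re, Complex.conj_im] at h
  ext i j
  fin_cases i <;> fin_cases j <;> apply Complex.ext <;>
    simp [pauliScalar_apply, pauliVector_apply, pauliDot_eq] <;> linarith [h 0 0, h 0 1, h 1 0, h 1 1]

theorem Matrix.IsHermitian.ext_pauli {M M' : Mat₂} (hM : M.IsHermitian) (hM' : M'.IsHermitian)
    (hs : pauliScalar M = pauliScalar M') (hv : pauliVector M = pauliVector M') : M = M' := by
  rw [← hM.pauliScalar_smul_one_add_pauliDot_pauliVector,
    ← hM'.pauliScalar_smul_one_add_pauliDot_pauliVector, hs, hv]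

theorem det_smul_one_add_pauliDot (a : ℝ) (x : ℝ³) :
    ((a : ℂ) • 1 + pauliDot x).det = ((a ^ 2 - ‖x‖ ^ 2 : ℝ) : ℂ) := by
  rw [EuclideanSpace.real_norm_sq_eq, Fin.sum_univ_three, det_fin_two, pauliDot_eq]
  simp only [Matrix.add_apply, Matrix.smul_apply, one_apply_eq, one_apply_ne, of_apply, cons_val',
    cons_val_zero, cons_val_one, cons_val_fin_one, smul_eq_mul, mul_one, mul_zero, zero_add,
    zero_ne_one, one_ne_zero, ne_eq, not_false_eq_true]
  push_cast
  linear_combination (x 1 : ℂ) ^ 2 * Complex.I_sq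

theorem Matrix.PosSemidef.norm_pauliVector_le {M : Mat₂} (hM : M.PosSemidef) :
    ‖pauliVector M‖ ≤ pauliScalar M := by
  have htr : 0 ≤ pauliScalar M := div_nonneg (Complex.nonneg_iff.mp hM.trace_nonneg).1 zero_le_two
  have hdet := hM.det_nonneg
  rw [← hM.1.pauliScalar_smul_one_add_pauliDot_pauliVector, det_smul_one_add_pauliDot,
    Complex.zero_le_real, sub_nonneg] at hdet
  exact (pow_le_pow_iff_left₀ (norm_nonneg _) htr two_ne_zero).mp hdet

theorem pauliDot_conjTranspose (x : ℝ³) : (pauliDot x)ᴴ = pauliDot x := by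
  ext i j
  fin_cases i <;> fin_cases j <;> simp [pauliDot_eq, Matrix.conjTranspose_apply, sub_eq_add_neg]

theorem pauliDot_mul_self (x : ℝ³) : pauliDot x * pauliDot x = ((‖x‖ ^ 2 : ℝ) : ℂ) • 1 := by
  rw [EuclideanSpace.real_norm_sq_eq, Fin.sum_univ_three, pauliDot_eq]
  ext i j
  fin_cases i <;> fin_cases j <;> simp [mul_apply] <;>
    first | linear_combination (-(x 1 : ℂ) ^ 2) * Complex.I_sq | ring

theorem posSemidef_smul_one_add_pauliDot {a : ℝ} (ha : 0 ≤ a) {x : ℝ³} (hx : ‖x‖ = 1) :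
    ((a : ℂ) • (1 + pauliDot x)).PosSemidef := by
  have hB : (1 + pauliDot x)ᴴ * (1 + pauliDot x) = (2 : ℂ) • (1 + pauliDot x) := by
    rw [conjTranspose_add, conjTranspose_one, pauliDot_conjTranspose, add_mul, one_mul, mul_add,
      mul_one, pauliDot_mul_self, hx, one_pow, Complex.ofReal_one, one_smul]
    module
  have hBpsd : (1 + pauliDot x).PosSemidef := by
    have := (posSemidef_conjTranspose_mul_self (1 + pauliDot x)).smul (a := (2⁻¹ : ℂ))
      (by positivity)
    rwa [hB, smul_smul, inv_mul_cancel₀ two_ne_zero, one_smul] at this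
  exact hBpsd.smul (Complex.zero_le_real.mpr ha)

theorem IsPOVM.sum_pauliScalar {N : ℕ} {M : Fin N → Mat₂} (hM : IsPOVM M) :
    ∑ i, pauliScalar (M i) = 1 := by
  rw [← map_sum, hM.2, pauliScalar_one]

theorem IsPOVM.sum_pauliVector {N : ℕ} {M : Fin N → Mat₂} (hM : IsPOVM M) :
    ∑ i, pauliVector (M i) = 0 := by
  rw [← map_sum, hM.2, pauliVector_one]

theorem isPOVM_smul_one_add_pauliDot {N : ℕ} {p : Fin N → ℝ} {u : Fin N → ℝ³}
    (hp : ∀ i, 0 ≤ p i) (hu : ∀ i, ‖u i‖ = 1) (hpsum : ∑ i, p i = 1)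
    (hpu : ∑ i, p i • u i = 0) : IsPOVM fun i => (p i : ℂ) • (1 + pauliDot (u i)) := by
  have hpsd i := posSemidef_smul_one_add_pauliDot (hp i) (hu i)
  refine ⟨hpsd, (posSemidef_sum _ fun i _ => hpsd i).1.ext_pauli isHermitian_one ?_ ?_⟩
  · simp only [map_sum, pauliScalar_smul_one_add_pauliDot, hpsum, pauliScalar_one]
  · simp only [map_sum, pauliVector_smul_one_add_pauliDot, hpu, pauliVector_one]

def successProb {N : ℕ} (q : Fin N → ℝ) (ρ M : Fin N → Mat₂) : ℝ :=
  ∑ i, q i * ((ρ i * M i).trace).re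

theorem pGuess_eq_of_isPOVM_of_successProb_eq {N : ℕ} {q : Fin N → ℝ} {ρ : Fin N → Mat₂}
    {K : ℝ} {M₀ : Fin N → Mat₂} (hM₀ : IsPOVM M₀) (hM₀K : successProb q ρ M₀ = K)
    (hle : ∀ M, IsPOVM M → successProb q ρ M ≤ K) : pGuess q ρ = K :=
  IsGreatest.csSup_eq ⟨⟨M₀, hM₀, hM₀K.symm⟩, by rintro _ ⟨M, hM, rfl⟩; exact hle M hM⟩

theorem successProb_eq_sum_pauli {N : ℕ} {q : Fin N → ℝ} {v : Fin N → ℝ³}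
    {ρ : Fin N → Mat₂} (hρ : ∀ i, ρ i = (2⁻¹ : ℂ) • (1 + pauliDot (v i))) (M : Fin N → Mat₂) :
    successProb q ρ M = ∑ i, q i * (pauliScalar (M i) + ⟪v i, pauliVector (M i)⟫) := by
  simp only [successProb, hρ, re_trace_half_one_add_pauliDot_mul]

def pauliSlack (x : ℝ³) (M : Mat₂) : ℝ := ‖x‖ * pauliScalar M - ⟪x, pauliVector M⟫

theorem Matrix.PosSemidef.pauliSlack_nonneg {M : Mat₂} (hM : M.PosSemidef) (x : ℝ³) :
    0 ≤ pauliSlack x M :=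
  sub_nonneg.mpr (real_inner_le_norm_mul_of_norm_le x hM.norm_pauliVector_le)

theorem Matrix.PosSemidef.pauliVector_eq_of_pauliSlack_eq_zero {M : Mat₂} (hM : M.PosSemidef)
    {x : ℝ³} (hx : x ≠ 0) (h : pauliSlack x M = 0) :
    pauliVector M = (pauliScalar M / ‖x‖) • x :=
  eq_div_norm_smul_of_inner_eq_norm_mul hx hM.norm_pauliVector_le (sub_eq_zero.mp h).symm

theorem pauliSlack_smul_one_add_pauliDot_inv_norm_smul (a : ℝ) (x : ℝ³) :
    pauliSlack x ((a : ℂ) • (1 + pauliDot (‖x‖⁻¹ • x))) = 0 := by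
  rw [pauliSlack, pauliScalar_smul_one_add_pauliDot, pauliVector_smul_one_add_pauliDot,
    real_inner_smul_right, real_inner_smul_right, real_inner_self_eq_norm_mul_norm]
  field_simp
  ring

section Ensemble

variable {N : ℕ} {q : Fin N → ℝ} {v s : Fin N → ℝ³} {ρ : Fin N → Mat₂} {b c : ℝ³} {K : ℝ}

theorem successProb_eq_sub_sum_pauliSlack (hρ : ∀ i, ρ i = (2⁻¹ : ℂ) • (1 + pauliDot (v i)))
    (hq : ∀ i, q i = K - ‖s i - c‖) (hs : ∀ i, q i • v i = s i + b) {M : Fin N → Mat₂}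
    (hM : IsPOVM M) : successProb q ρ M = K - ∑ i, pauliSlack (s i - c) (M i) :=
  (successProb_eq_sum_pauli hρ M).trans <|
    sum_mul_add_inner_eq_sub_sum hq hs hM.sum_pauliScalar hM.sum_pauliVector

theorem successProb_le_of_isPOVM (hρ : ∀ i, ρ i = (2⁻¹ : ℂ) • (1 + pauliDot (v i)))
    (hq : ∀ i, q i = K - ‖s i - c‖) (hs : ∀ i, q i • v i = s i + b) {M : Fin N → Mat₂}
    (hM : IsPOVM M) : successProb q ρ M ≤ K := by
  rw [successProb_eq_sub_sum_pauliSlack hρ hq hs hM, sub_le_self_iff]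
  exact Finset.sum_nonneg fun i _ => (hM.1 i).pauliSlack_nonneg _

theorem successProb_eq_iff_forall_pauliSlack_eq_zero
    (hρ : ∀ i, ρ i = (2⁻¹ : ℂ) • (1 + pauliDot (v i))) (hq : ∀ i, q i = K - ‖s i - c‖)
    (hs : ∀ i, q i • v i = s i + b) {M : Fin N → Mat₂} (hM : IsPOVM M) :
    successProb q ρ M = K ↔ ∀ i, pauliSlack (s i - c) (M i) = 0 := by
  rw [successProb_eq_sub_sum_pauliSlack hρ hq hs hM, sub_eq_self,
    Finset.sum_eq_zero_iff_of_nonneg fun i _ => (hM.1 i).pauliSlack_nonneg _]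
  simp only [Finset.mem_univ, true_implies]

end Ensemble

section Candidate

variable {N : ℕ} {s : Fin N → ℝ³} {c : ℝ³} {t p : Fin N → ℝ} {u : Fin N → ℝ³}

theorem isPOVM_of_barycentric [Nonempty (Fin N)] (ht : ∀ i, 0 < t i) (htsum : ∑ i, t i = 1)
    (hts : ∑ i, t i • s i = c) (hsc : ∀ i, s i ≠ c)
    (hp : ∀ i, p i = t i * ‖s i - c‖ / ∑ j, t j * ‖s j - c‖)
    (hu : ∀ i, u i = ‖s i - c‖⁻¹ • (s i - c)) :
    IsPOVM fun i => (p i : ℂ) • (1 + pauliDot (u i)) := by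
  have hx i : s i - c ≠ 0 := sub_ne_zero.mpr (hsc i)
  have htx j : 0 ≤ t j * ‖s j - c‖ := mul_nonneg (ht j).le (norm_nonneg _)
  refine isPOVM_smul_one_add_pauliDot (fun i => ?_) (fun i => ?_) ?_ ?_
  · rw [hp]
    exact div_nonneg (htx i) (Finset.sum_nonneg fun j _ => htx j)
  · rw [hu]
    exact norm_smul_inv_norm (hx i)
  · simp only [hp]
    exact sum_mul_norm_div_sum_eq_one ht hx
  · simp only [hp, hu]
    exact sum_mul_norm_div_smul_inv_norm_smul_eq_zero hx (sum_smul_sub_eq_zero htsum hts)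

theorem IsPOVM.eq_of_forall_pauliSlack_eq_zero {M : Fin N → Mat₂} (hM : IsPOVM M)
    (haff : AffineIndependent ℝ s) (htsum : ∑ i, t i = 1) (hts : ∑ i, t i • s i = c)
    (hsc : ∀ i, s i ≠ c) (hp : ∀ i, p i = t i * ‖s i - c‖ / ∑ j, t j * ‖s j - c‖)
    (hu : ∀ i, u i = ‖s i - c‖⁻¹ • (s i - c)) (hslack : ∀ i, pauliSlack (s i - c) (M i) = 0) :
    M = fun i => (p i : ℂ) • (1 + pauliDot (u i)) := by
  have hw i := (hM.1 i).pauliVector_eq_of_pauliSlack_eq_zero (sub_ne_zero.mpr (hsc i)) (hslack i)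
  have hα i : pauliScalar (M i) = p i := by
    rw [hp, haff.eq_mul_norm_div_of_sum_div_norm_smul_eq_zero htsum hts hsc hM.sum_pauliScalar]
    rw [← hM.sum_pauliVector]
    exact Finset.sum_congr rfl fun i _ => (hw i).symm
  funext i
  rw [← (hM.1 i).1.pauliScalar_smul_one_add_pauliDot_pauliVector, hw, hα, hu, div_eq_mul_inv,
    ← smul_smul, pauliDot_smul, smul_add]

end Candidate

/-- Theorem 1, sufficiency and value. Index `0` plays the role of
index `1` in the paper, so `q 0 = max_i q i`, `e i = q 0 - q i`,
`s i = q i • v i - q 0 • v 0` (hence `s 0 = 0`). If `{s i}` is affinely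
independent (`D = N - 1`), `c` lies in the relative interior of
`conv {s 1, …, s N}` with barycentric coordinates `t`, and
`‖c - s i‖ - ‖c‖ = e i` for all `i ≠ 0`, then `pGuess = q 0 + ‖c‖` and the
POVM `M i = p i • (1 + u i · σ)` (with `p`, `u` as in Eq. (19)) is the unique
optimal POVM. -/
theorem thm1_sufficiency {N : ℕ} (hN : 2 ≤ N)
    (q : Fin N → ℝ) (v : Fin N → EuclideanSpace ℝ (Fin 3))
    (ρ : Fin N → Matrix (Fin 2) (Fin 2) ℂ)
    (hρ : ∀ i, ρ i = (2⁻¹ : ℂ) • (1 + pauliDot (v i)))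
    (e : Fin N → ℝ) (he : ∀ i, e i = q ⟨0, by omega⟩ - q i)
    (s : Fin N → EuclideanSpace ℝ (Fin 3))
    (hs : ∀ i, s i = q i • v i - q (⟨0, by omega⟩ : Fin N) • v ⟨0, by omega⟩)
    (haff : AffineIndependent ℝ s)
    (c : EuclideanSpace ℝ (Fin 3))
    (hhyp : ∀ i, i ≠ ⟨0, by omega⟩ → ‖c - s i‖ - ‖c‖ = e i)
    (t : Fin N → ℝ) (ht : ∀ i, 0 < t i) (htsum : ∑ i, t i = 1)
    (hts : ∑ i, t i • s i = c)
    (p : Fin N → ℝ)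
    (hp : ∀ i, p i = t i * ‖s i - c‖ / ∑ j, t j * ‖s j - c‖)
    (u : Fin N → EuclideanSpace ℝ (Fin 3))
    (hu : ∀ i, u i = ‖s i - c‖⁻¹ • (s i - c)) :
    pGuess q ρ = q ⟨0, by omega⟩ + ‖c‖ ∧
    IsOptimalPOVM q ρ (fun i => (p i : ℂ) • (1 + pauliDot (u i))) ∧
    (∀ M : Fin N → Matrix (Fin 2) (Fin 2) ℂ, IsOptimalPOVM q ρ M →
      M = fun i => (p i : ℂ) • (1 + pauliDot (u i))) := by
  set i₀ : Fin N := ⟨0, by omega⟩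
  have : Nontrivial (Fin N) := Fin.nontrivial_iff_two_le.mpr hN
  have hsc := haff.ne_of_sum_smul_eq htsum hts fun i => (ht i).ne'
  have hq i : q i = q i₀ + ‖c‖ - ‖s i - c‖ := by
    by_cases hi : i = i₀
    · simp [hi, hs]
    · linarith [hhyp i hi, he i, norm_sub_rev c (s i)]
  have hqv i : q i • v i = s i + q i₀ • v i₀ := by rw [hs]; abel
  have hcand := isPOVM_of_barycentric ht htsum hts hsc hp hu
  have hval := (successProb_eq_iff_forall_pauliSlack_eq_zero hρ hq hqv hcand).mpr fun i => by
    rw [hu]; exact pauliSlack_smul_one_add_pauliDot_inv_norm_smul _ _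
  have hpg := pGuess_eq_of_isPOVM_of_successProb_eq hcand hval
    fun M hM => successProb_le_of_isPOVM hρ hq hqv hM
  refine ⟨hpg, ⟨hcand, hval.trans hpg.symm⟩, fun M ⟨hM, hMval⟩ => ?_⟩
  exact hM.eq_of_forall_pauliSlack_eq_zero haff htsum hts hsc hp hu <|
    (successProb_eq_iff_forall_pauliSlack_eq_zero hρ hq hqv hM).mp (hMval.trans hpg)
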